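/- arXiv:1507.02846 — 3 statements merged into one kernel-verified Lean document; each statement's English description precedes it below -/
import Mathlib

section
/- For independent St. Petersburg random variables X₁, X₂ and integers 1 ≤ k < ℓ, P{X₁ + X₂ > 2^ℓ + 2^k} / P{X₁ > 2^ℓ + 2^k} = 2 + 2·2^{-k} - 4·2^{-ℓ}. In particular, for every δ > 0, the limit of P{X₁+X₂ > x}/P{X₁ > x} as x → ∞ restricted to x with fractional part {log₂ x} ≥ δ equals 2. -/
/-!
Almost surely `X₁` and `X₂` are powers of two. For `2 ^ n ≤ x < 2 ^ (n + 1)` with `n ≥ 1`, two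
powers of two add up to more than `x` iff one of them exceeds `2 ^ n`, or one of them equals `2 ^ n`
and the other exceeds `x - 2 ^ n`. Splitting `{x < X₁ + X₂}` accordingly and using independence
gives the exact formula
`P{X₁ + X₂ > x} / P{X₁ > x} = 2 - 4 · 2⁻ⁿ + P{X₁ > x - 2 ^ n} + P{X₂ > x - 2 ^ n}`.
For `x = 2 ^ ℓ + 2 ^ k` the last two terms equal `2⁻ᵏ`. If `{log₂ x} ≥ δ`, then
`x - 2 ^ n ≥ (2 ^ δ - 1) 2 ^ n`, so all error terms are `O(1 / x)`.
-/

open MeasureTheory ProbabilityTheory Filter Topology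
open scoped ENNReal
open Set

lemma tsum_inv_two_pow_succ_add (n : ℕ) :
    ∑' k : ℕ, ((2 : ℝ≥0∞) ^ (n + 1 + k))⁻¹ = ((2 : ℝ≥0∞) ^ n)⁻¹ := by
  simp_rw [ENNReal.inv_pow, pow_add, ENNReal.tsum_mul_left, ENNReal.tsum_geometric,
    ENNReal.one_sub_inv_two, inv_inv, pow_one, mul_assoc,
    ENNReal.inv_mul_cancel two_ne_zero ENNReal.ofNat_ne_top, mul_one]

lemma lt_two_pow_iff {t : ℝ} {n k : ℕ} (h₁ : 2 ^ n ≤ t) (h₂ : t < 2 ^ (n + 1)) :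
    t < 2 ^ k ↔ n < k := by
  constructor
  · intro h
    by_contra! hk
    linarith [pow_le_pow_right₀ (one_le_two (α := ℝ)) hk]
  · intro h
    linarith [pow_le_pow_right₀ (one_le_two (α := ℝ)) (show n + 1 ≤ k from h)]

lemma two_pow_trichotomy (i n : ℕ) :
    2 * (2 : ℝ) ^ i ≤ 2 ^ n ∨ (2 : ℝ) ^ i = 2 ^ n ∨ 2 * (2 : ℝ) ^ n ≤ 2 ^ i := by
  rcases lt_trichotomy i n with h | rfl | h
  · exact .inl (pow_succ' (2 : ℝ) i ▸ pow_le_pow_right₀ one_le_two h)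
  · exact .inr (.inl rfl)
  · exact .inr (.inr (pow_succ' (2 : ℝ) n ▸ pow_le_pow_right₀ one_le_two h))

lemma lt_two_pow_add_two_pow_iff {x : ℝ} {n i j : ℕ} (h₁ : 2 ^ n ≤ x) (h₂ : x < 2 ^ (n + 1)) :
    x < 2 ^ i + 2 ^ j ↔
      2 ^ n < (2 : ℝ) ^ i ∨ (2 ^ i ≤ (2 : ℝ) ^ n ∧ 2 ^ n < (2 : ℝ) ^ j) ∨
      (2 ^ i = (2 : ℝ) ^ n ∧ x - 2 ^ n < 2 ^ j ∧ (2 : ℝ) ^ j ≤ 2 ^ n) ∨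
      ((x - 2 ^ n < 2 ^ i ∧ (2 : ℝ) ^ i < 2 ^ n) ∧ (2 : ℝ) ^ j = 2 ^ n) := by
  rw [pow_succ] at h₂
  have hi : (0 : ℝ) < 2 ^ i := by positivity
  have hj : (0 : ℝ) < 2 ^ j := by positivity
  rcases two_pow_trichotomy i n with hin | hin | hin <;>
  rcases two_pow_trichotomy j n with hjn | hjn | hjn <;>
  constructor <;> intro h <;> grind

lemma two_pow_mul_rpow_le_of_le_fract_logb {x δ : ℝ} {n : ℕ} (h₁ : 2 ^ n ≤ x)
    (h₂ : x < 2 ^ (n + 1)) (hδ : δ ≤ Int.fract (Real.logb 2 x)) :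
    2 ^ n * (2 : ℝ) ^ δ ≤ x := by
  have hx : 0 < x := lt_of_lt_of_le (by positivity) h₁
  have hlog₁ : (n : ℝ) ≤ Real.logb 2 x := by
    rwa [Real.le_logb_iff_rpow_le one_lt_two hx, Real.rpow_natCast]
  have hlog₂ : Real.logb 2 x < n + 1 := by
    rwa [Real.logb_lt_iff_lt_rpow one_lt_two hx, ← Nat.cast_succ, Real.rpow_natCast]
  have hfloor : ⌊Real.logb 2 x⌋ = n :=
    Int.floor_eq_iff.2 ⟨by exact_mod_cast hlog₁, by exact_mod_cast hlog₂⟩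
  rw [Int.fract, hfloor, Int.cast_natCast] at hδ
  rw [← Real.rpow_natCast, ← Real.rpow_add two_pos, ← Real.le_logb_iff_rpow_le one_lt_two hx]
  linarith

lemma ProbabilityTheory.IndepFun.measureReal_inter_preimage_eq_mul {Ω β β' : Type*}
    [MeasurableSpace Ω] [MeasurableSpace β] [MeasurableSpace β'] {μ : Measure Ω}
    {f : Ω → β} {g : Ω → β'} (h : IndepFun f g μ) {s : Set β} {t : Set β'}
    (hs : MeasurableSet s) (ht : MeasurableSet t) :
    μ.real (f ⁻¹' s ∩ g ⁻¹' t) = μ.real (f ⁻¹' s) * μ.real (g ⁻¹' t) := by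
  simp only [Measure.real, h.measure_inter_preimage_eq_mul s t hs ht, ENNReal.toReal_mul]

structure IsStPetersburg {Ω : Type*} [MeasurableSpace Ω] (X : Ω → ℝ) (μ : Measure Ω) :
    Prop where
  measurable : Measurable X
  measure_eq_two_pow : ∀ k : ℕ, 1 ≤ k → μ {ω | X ω = 2 ^ k} = ((2 : ℝ≥0∞) ^ k)⁻¹

namespace IsStPetersburg

variable {Ω : Type*} [MeasurableSpace Ω] {μ : Measure Ω} {X X₁ X₂ : Ω → ℝ}

lemma measurableSet_eq (hX : IsStPetersburg X μ) (a : ℝ) : MeasurableSet {ω | X ω = a} :=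
  hX.measurable (measurableSet_singleton a)

lemma measureReal_eq (hX : IsStPetersburg X μ) {n : ℕ} (hn : 1 ≤ n) :
    μ.real (X ⁻¹' {2 ^ n}) = ((2 : ℝ) ^ n)⁻¹ := by
  simp [Measure.real, preimage, hX.measure_eq_two_pow n hn]

lemma measure_iUnion_eq_two_pow (hX : IsStPetersburg X μ) (n : ℕ) :
    μ (⋃ k : ℕ, {ω | X ω = 2 ^ (n + 1 + k)}) = ((2 : ℝ≥0∞) ^ n)⁻¹ := by
  have hdisj : Pairwise (Function.onFun Disjoint fun k : ℕ => {ω | X ω = 2 ^ (n + 1 + k)}) :=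
    fun i j hij => disjoint_left.2 fun ω hi hj => hij <| by
      have := (pow_right_inj₀ two_pos (by norm_num : (2 : ℝ) ≠ 1)).1 (hi.symm.trans hj)
      omega
  rw [measure_iUnion hdisj fun k => hX.measurableSet_eq _, ← tsum_inv_two_pow_succ_add n]
  exact tsum_congr fun k => hX.measure_eq_two_pow _ (by omega)

variable [IsProbabilityMeasure μ]

lemma ae_exists_eq_two_pow (hX : IsStPetersburg X μ) :
    ∀ᵐ ω ∂μ, ∃ k : ℕ, 1 ≤ k ∧ X ω = 2 ^ k := by
  have h := hX.measure_iUnion_eq_two_pow 0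
  rw [pow_zero, inv_one, ← prob_compl_eq_zero_iff (.iUnion fun k => hX.measurableSet_eq _)] at h
  filter_upwards [mem_ae_iff.2 h] with ω hω
  obtain ⟨k, hk⟩ := mem_iUnion.1 hω
  exact ⟨0 + 1 + k, by omega, hk⟩

lemma measure_gt (hX : IsStPetersburg X μ) {t : ℝ} {n : ℕ} (h₁ : 2 ^ n ≤ t)
    (h₂ : t < 2 ^ (n + 1)) : μ (X ⁻¹' Ioi t) = ((2 : ℝ≥0∞) ^ n)⁻¹ := by
  rw [← hX.measure_iUnion_eq_two_pow n]
  refine measure_congr (eventuallyEq_set.2 ?_)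
  filter_upwards [hX.ae_exists_eq_two_pow] with ω hω
  obtain ⟨k, -, hk⟩ := hω
  simp only [mem_preimage, mem_Ioi, mem_iUnion, mem_ofPred_eq, hk,
    lt_two_pow_iff h₁ h₂, pow_right_inj₀ two_pos (by norm_num : (2 : ℝ) ≠ 1)]
  exact ⟨fun h => ⟨k - (n + 1), by omega⟩, fun ⟨j, hj⟩ => by omega⟩

lemma measureReal_gt (hX : IsStPetersburg X μ) {t : ℝ} {n : ℕ} (h₁ : 2 ^ n ≤ t)
    (h₂ : t < 2 ^ (n + 1)) : μ.real (X ⁻¹' Ioi t) = ((2 : ℝ) ^ n)⁻¹ := by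
  simp [Measure.real, hX.measure_gt h₁ h₂]

lemma measureReal_gt_two_pow (hX : IsStPetersburg X μ) (n : ℕ) :
    μ.real (X ⁻¹' Ioi (2 ^ n)) = ((2 : ℝ) ^ n)⁻¹ :=
  hX.measureReal_gt le_rfl (pow_lt_pow_right₀ one_lt_two n.lt_succ_self)

lemma measureReal_le_two_pow (hX : IsStPetersburg X μ) (n : ℕ) :
    μ.real (X ⁻¹' Iic (2 ^ n)) = 1 - ((2 : ℝ) ^ n)⁻¹ := by
  rw [← compl_Ioi, preimage_compl, measureReal_compl (hX.measurable measurableSet_Ioi),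
    probReal_univ, hX.measureReal_gt_two_pow]

lemma measureReal_Ioc (hX : IsStPetersburg X μ) {y : ℝ} {n : ℕ} (hy : y ≤ 2 ^ n) :
    μ.real (X ⁻¹' Ioc y (2 ^ n)) = μ.real (X ⁻¹' Ioi y) - ((2 : ℝ) ^ n)⁻¹ := by
  rw [← Ioi_sdiff_Ioi, preimage_sdiff, measureReal_sdiff (preimage_mono (Ioi_subset_Ioi hy))
    (hX.measurable measurableSet_Ioi), hX.measureReal_gt_two_pow]

lemma measureReal_Ioo (hX : IsStPetersburg X μ) {y : ℝ} {n : ℕ} (hn : 1 ≤ n)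
    (hy : y < 2 ^ n) :
    μ.real (X ⁻¹' Ioo y (2 ^ n)) = μ.real (X ⁻¹' Ioi y) - 2 * ((2 : ℝ) ^ n)⁻¹ := by
  have hIci : μ.real (X ⁻¹' Ici (2 ^ n)) = 2 * ((2 : ℝ) ^ n)⁻¹ := by
    rw [← Ioi_insert, insert_eq, preimage_union,
      measureReal_union ((disjoint_singleton_left.2 self_notMem_Ioi).preimage X)
        (hX.measurable measurableSet_Ioi),
      hX.measureReal_eq hn, hX.measureReal_gt_two_pow, two_mul]
  rw [← Ioi_sdiff_Ici, preimage_sdiff, measureReal_sdiff (preimage_mono (Ici_subset_Ioi.2 hy))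
    (hX.measurable measurableSet_Ici), hIci]

lemma measureReal_gt_le (hX : IsStPetersburg X μ) {s : ℝ} (hs : 0 < s) :
    μ.real (X ⁻¹' Ioi s) ≤ 2 / s := by
  rcases lt_or_ge s 1 with hs1 | hs1
  · exact measureReal_le_one.trans ((one_le_div hs).2 (by linarith))
  · obtain ⟨n, h₁, h₂⟩ := exists_nat_pow_near hs1 one_lt_two
    rw [hX.measureReal_gt h₁ h₂, le_div_iff₀ hs, inv_mul_le_iff₀ (by positivity), ← pow_succ]
    exact h₂.le

lemma measureReal_add_gt (hX₁ : IsStPetersburg X₁ μ) (hX₂ : IsStPetersburg X₂ μ)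
    (hind : IndepFun X₁ X₂ μ) {x : ℝ} {n : ℕ} (hn : 1 ≤ n) (h₁ : 2 ^ n ≤ x)
    (h₂ : x < 2 ^ (n + 1)) :
    μ.real {ω | x < X₁ ω + X₂ ω} = ((2 : ℝ) ^ n)⁻¹ * (2 - 4 * ((2 : ℝ) ^ n)⁻¹ +
      μ.real (X₁ ⁻¹' Ioi (x - 2 ^ n)) + μ.real (X₂ ⁻¹' Ioi (x - 2 ^ n))) := by
  have hy : x - 2 ^ n < (2 : ℝ) ^ n := by rw [pow_succ] at h₂; linarith
  have hae : {ω | x < X₁ ω + X₂ ω} =ᵐ[μ] (X₁ ⁻¹' Ioi (2 ^ n) ∪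
      (X₁ ⁻¹' Iic (2 ^ n) ∩ X₂ ⁻¹' Ioi (2 ^ n) ∪
      (X₁ ⁻¹' {2 ^ n} ∩ X₂ ⁻¹' Ioc (x - 2 ^ n) (2 ^ n) ∪
        X₁ ⁻¹' Ioo (x - 2 ^ n) (2 ^ n) ∩ X₂ ⁻¹' {2 ^ n})) : Set Ω) := by
    refine eventuallyEq_set.2 ?_
    filter_upwards [hX₁.ae_exists_eq_two_pow, hX₂.ae_exists_eq_two_pow] with ω hω₁ hω₂
    obtain ⟨i, -, hi⟩ := hω₁
    obtain ⟨j, -, hj⟩ := hω₂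
    simp only [mem_union, mem_inter_iff, mem_preimage, mem_Ioi, mem_Iic, mem_Ioc,
      mem_Ioo, mem_singleton_iff, hi, hj, lt_two_pow_add_two_pow_iff h₁ h₂]
  have hm₁ := hX₁.measurable
  have hm₂ := hX₂.measurable
  rw [measureReal_congr hae, measureReal_union, measureReal_union, measureReal_union,
    hind.measureReal_inter_preimage_eq_mul measurableSet_Iic measurableSet_Ioi,
    hind.measureReal_inter_preimage_eq_mul (measurableSet_singleton _) measurableSet_Ioc,
    hind.measureReal_inter_preimage_eq_mul measurableSet_Ioo (measurableSet_singleton _),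
    hX₁.measureReal_gt_two_pow, hX₁.measureReal_le_two_pow, hX₂.measureReal_gt_two_pow,
    hX₁.measureReal_eq hn, hX₂.measureReal_Ioc hy.le, hX₁.measureReal_Ioo hn hy,
    hX₂.measureReal_eq hn]
  · ring
  all_goals first
    | measurability
    | refine disjoint_left.2 fun ω h h' => ?_
      simp only [mem_union, mem_inter_iff, mem_preimage, mem_Ioi, mem_Iic, mem_Ioc, mem_Ioo,
        mem_singleton_iff] at h h'
      grind

lemma measureReal_add_gt_div (hX₁ : IsStPetersburg X₁ μ)
    (hX₂ : IsStPetersburg X₂ μ) (hind : IndepFun X₁ X₂ μ) {x : ℝ} {n : ℕ} (hn : 1 ≤ n)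
    (h₁ : 2 ^ n ≤ x) (h₂ : x < 2 ^ (n + 1)) :
    μ.real {ω | x < X₁ ω + X₂ ω} / μ.real (X₁ ⁻¹' Ioi x) = 2 - 4 * ((2 : ℝ) ^ n)⁻¹ +
      μ.real (X₁ ⁻¹' Ioi (x - 2 ^ n)) + μ.real (X₂ ⁻¹' Ioi (x - 2 ^ n)) := by
  rw [hX₁.measureReal_add_gt hX₂ hind hn h₁ h₂, hX₁.measureReal_gt h₁ h₂,
    mul_div_cancel_left₀ _ (by positivity)]

lemma abs_measureReal_add_gt_div_sub_two_le (hX₁ : IsStPetersburg X₁ μ)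
    (hX₂ : IsStPetersburg X₂ μ) (hind : IndepFun X₁ X₂ μ) {x δ : ℝ} (hδ : 0 < δ) (hx : 2 ≤ x)
    (hfract : δ ≤ Int.fract (Real.logb 2 x)) :
    |μ.real {ω | x < X₁ ω + X₂ ω} / μ.real (X₁ ⁻¹' Ioi x) - 2| ≤
      (8 + 8 / (2 ^ δ - 1)) / x := by
  obtain ⟨n, h₁, h₂⟩ := exists_nat_pow_near (by linarith : 1 ≤ x) one_lt_two
  have hn : 1 ≤ n := by
    by_contra! h
    rw [Nat.lt_one_iff.1 h, zero_add, pow_one] at h₂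
    linarith
  have h₂' : x < 2 ^ n * 2 := pow_succ (2 : ℝ) n ▸ h₂
  set c : ℝ := 2 ^ δ - 1
  have hc : 0 < c := sub_pos.2 (Real.one_lt_rpow one_lt_two hδ)
  have hgap : c * 2 ^ n ≤ x - 2 ^ n := by
    linarith [two_pow_mul_rpow_le_of_le_fract_logb h₁ h₂ hfract]
  have hy : 0 < x - 2 ^ n := lt_of_lt_of_le (by positivity) hgap
  have hp : ((2 : ℝ) ^ n)⁻¹ ≤ 2 / x := by
    rw [inv_eq_one_div, div_le_div_iff₀ (by positivity) (by linarith)]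
    linarith
  have htail : ∀ {X : Ω → ℝ}, IsStPetersburg X μ →
      μ.real (X ⁻¹' Ioi (x - 2 ^ n)) ≤ 4 / (c * x) := fun hX => by
    refine (hX.measureReal_gt_le hy).trans ?_
    rw [div_le_div_iff₀ hy (by positivity)]
    nlinarith
  have hC : (8 + 8 / c) / x = 4 * (2 / x) + 2 * (4 / (c * x)) := by
    field_simp
    ring
  rw [hX₁.measureReal_add_gt_div hX₂ hind hn h₁ h₂, hC, abs_le]
  have hp₀ : 0 < ((2 : ℝ) ^ n)⁻¹ := by positivity
  have hT₁ := measureReal_nonneg (μ := μ) (s := X₁ ⁻¹' Ioi (x - 2 ^ n))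
  have hT₂ := measureReal_nonneg (μ := μ) (s := X₂ ⁻¹' Ioi (x - 2 ^ n))
  constructor <;> linarith [htail hX₁, htail hX₂]

lemma measureReal_add_gt_div_of_two_pow_add (hX₁ : IsStPetersburg X₁ μ)
    (hX₂ : IsStPetersburg X₂ μ) (hind : IndepFun X₁ X₂ μ) {k l : ℕ} (hk : 1 ≤ k) (hkl : k < l) :
    μ.real {ω | (2 : ℝ) ^ l + 2 ^ k < X₁ ω + X₂ ω} / μ.real (X₁ ⁻¹' Ioi (2 ^ l + 2 ^ k)) =
      2 + 2 * ((2 : ℝ) ^ k)⁻¹ - 4 * ((2 : ℝ) ^ l)⁻¹ := by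
  have h₂ : (2 : ℝ) ^ l + 2 ^ k < 2 ^ (l + 1) := by
    rw [pow_succ, mul_two]
    gcongr
    exact one_lt_two
  rw [hX₁.measureReal_add_gt_div hX₂ hind (hk.trans hkl.le)
    (le_add_of_nonneg_right (by positivity)) h₂, add_sub_cancel_left,
    hX₁.measureReal_gt_two_pow, hX₂.measureReal_gt_two_pow]
  ring

lemma tendsto_measureReal_add_gt_div (hX₁ : IsStPetersburg X₁ μ)
    (hX₂ : IsStPetersburg X₂ μ) (hind : IndepFun X₁ X₂ μ) {δ : ℝ} (hδ : 0 < δ) :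
    Tendsto (fun x : ℝ => μ.real {ω | x < X₁ ω + X₂ ω} / μ.real (X₁ ⁻¹' Ioi x))
      (atTop ⊓ 𝓟 {x : ℝ | δ ≤ Int.fract (Real.logb 2 x)}) (𝓝 2) := by
  have hbound : Tendsto (fun x : ℝ => (8 + 8 / (2 ^ δ - 1)) / x)
      (atTop ⊓ 𝓟 {x : ℝ | δ ≤ Int.fract (Real.logb 2 x)}) (𝓝 0) :=
    (tendsto_const_nhds.div_atTop tendsto_id).mono_left inf_le_left
  refine tendsto_sub_nhds_zero_iff.1 (squeeze_zero_norm' ?_ hbound)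
  filter_upwards [mem_inf_of_left (Ici_mem_atTop 2), mem_inf_of_right (mem_principal_self _)]
    with x hx hfract
  exact hX₁.abs_measureReal_add_gt_div_sub_two_le hX₂ hind hδ hx hfract

end IsStPetersburg

/-- For independent St. Petersburg `X₁, X₂` and integers `1 ≤ k < ℓ`,
`P{X₁+X₂ > 2^ℓ + 2^k} / P{X₁ > 2^ℓ + 2^k} = 2 + 2·2^{-k} - 4·2^{-ℓ}`; in particular,
for every `δ > 0`, `P{X₁+X₂ > x}/P{X₁ > x} → 2` as `x → ∞` along `{log₂ x} ≥ δ`. -/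
theorem stmt_5 {Ω : Type*} [MeasurableSpace Ω] (μ : Measure Ω) [IsProbabilityMeasure μ]
    (X₁ X₂ : Ω → ℝ) (hm₁ : Measurable X₁) (hm₂ : Measurable X₂)
    (hindep : IndepFun X₁ X₂ μ)
    (hd₁ : ∀ k : ℕ, 1 ≤ k → μ {ω | X₁ ω = 2 ^ k} = ((2 : ℝ≥0∞) ^ k)⁻¹)
    (hd₂ : ∀ k : ℕ, 1 ≤ k → μ {ω | X₂ ω = 2 ^ k} = ((2 : ℝ≥0∞) ^ k)⁻¹) :
    (∀ k l : ℕ, 1 ≤ k → k < l →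
      (μ {ω | (2 : ℝ) ^ l + 2 ^ k < X₁ ω + X₂ ω}).toReal /
          (μ {ω | (2 : ℝ) ^ l + 2 ^ k < X₁ ω}).toReal =
        2 + 2 * ((2 : ℝ) ^ k)⁻¹ - 4 * ((2 : ℝ) ^ l)⁻¹) ∧
    (∀ δ : ℝ, 0 < δ →
      Tendsto (fun x : ℝ =>
          (μ {ω | x < X₁ ω + X₂ ω}).toReal / (μ {ω | x < X₁ ω}).toReal)
        (atTop ⊓ 𝓟 {x : ℝ | δ ≤ Int.fract (Real.logb 2 x)}) (𝓝 2)) := by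
  have hX₁ : IsStPetersburg X₁ μ := ⟨hm₁, hd₁⟩
  have hX₂ : IsStPetersburg X₂ μ := ⟨hm₂, hd₂⟩
  exact ⟨fun k l hk hkl => hX₁.measureReal_add_gt_div_of_two_pow_add hX₂ hindep hk hkl,
    fun δ hδ => hX₁.tendsto_measureReal_add_gt_div hX₂ hindep hδ⟩
end

section
/- Let Sₙ be the sum of n i.i.d. St. Petersburg random variables. Then for every fixed n ≥ 1, liminf_{x→∞} x·P{Sₙ > x} = n and limsup_{x→∞} x·P{Sₙ > x} = 2n. -/
/-!
For `2 ^ k ≤ x < 2 ^ (k + 1)` the tail is `F(x) = P{X > x} = 2⁻ᵏ`, so `x F(x)` oscillates in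
`[1, 2)`: it equals `1` at `x = 2 ^ k` and approaches `2` just below `2 ^ (k + 1)`.
Up to errors of order `n² x F(ηx)² = O(1/x)`, `Sₙ > x` happens through a single big summand.
Bonferroni and independence give `P{Sₙ > x} ≥ n F(x) - n² F(x)²`; and if no two summands
exceed `ηx`, then `Sₙ > x` forces one summand above `(1 - (n - 1)η) x`, whence
`P{Sₙ > x} ≤ n F((1 - (n - 1)η) x) + n² F(ηx)²`. So `x P{Sₙ > x}` has the liminf `n` and
the limsup `2n` of `n x F(x)`, after letting `η → 0`.
-/

open MeasureTheory ProbabilityTheory Filter Topology Finset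
open scoped ENNReal

section LiminfLimsup

variable {α : Type*} {l : Filter α} {u : α → ℝ} {L : ℝ}

theorem Filter.liminf_eq_of_forall_pos (h_ev : ∀ ε > 0, ∀ᶠ x in l, L - ε ≤ u x)
    (h_freq : ∀ ε > 0, ∃ᶠ x in l, u x ≤ L + ε) : liminf u l = L := by
  have hbdd : IsBoundedUnder (· ≥ ·) l u := isBoundedUnder_of_eventually_ge (h_ev 1 one_pos)
  have hcobdd : IsCoboundedUnder (· ≥ ·) l u :=
    IsCoboundedUnder.of_frequently_le (h_freq 1 one_pos)
  exact le_antisymm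
    (le_of_forall_pos_le_add fun ε hε => liminf_le_of_frequently_le (h_freq ε hε) hbdd)
    (le_of_forall_sub_le fun ε hε => le_liminf_of_le hcobdd (h_ev ε hε))

theorem Filter.limsup_eq_of_forall_pos (h_ev : ∀ ε > 0, ∀ᶠ x in l, u x ≤ L + ε)
    (h_freq : ∀ ε > 0, ∃ᶠ x in l, L - ε ≤ u x) : limsup u l = L := by
  have hbdd : IsBoundedUnder (· ≤ ·) l u := isBoundedUnder_of_eventually_le (h_ev 1 one_pos)
  have hcobdd : IsCoboundedUnder (· ≤ ·) l u :=
    IsCoboundedUnder.of_frequently_ge (h_freq 1 one_pos)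
  exact le_antisymm
    (le_of_forall_pos_le_add fun ε hε => limsup_le_of_le hcobdd (h_ev ε hε))
    (le_of_forall_sub_le fun ε hε => le_limsup_of_frequently_le (h_freq ε hε) hbdd)

end LiminfLimsup

theorem exists_pos_mul_lt_half_and_div_one_sub_mul_lt (a K : ℝ) {ε : ℝ} (hε : 0 < ε) :
    ∃ η > 0, a * η < 1 / 2 ∧ K / (1 - a * η) < K + ε := by
  have h₁ : Tendsto (fun η : ℝ => a * η) (𝓝 0) (𝓝 0) := by
    simpa using (continuous_const_mul a).tendsto 0
  have h₂ : Tendsto (fun η : ℝ => K / (1 - a * η)) (𝓝 0) (𝓝 K) := by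
    have := (tendsto_const_nhds (x := K)).div ((tendsto_const_nhds (x := (1 : ℝ))).sub h₁)
      (by simp)
    rw [sub_zero, div_one] at this
    exact this
  obtain ⟨η, ⟨hη₁, hη₂⟩, hη⟩ :=
    (((h₁.eventually (gt_mem_nhds (by norm_num : (0 : ℝ) < 1 / 2))).and
      (h₂.eventually (gt_mem_nhds (lt_add_of_pos_right K hε)))).filter_mono
      (nhdsWithin_le_nhds (s := Set.Ioi 0)) |>.and self_mem_nhdsWithin).exists
  exact ⟨η, hη, hη₁, hη₂⟩

theorem Finset.exists_lt_sub_or_exists_two_lt_of_lt_sum {a : ℕ → ℝ} {n : ℕ} (hn : 0 < n)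
    {x : ℝ} (y : ℝ) (h : x < ∑ i ∈ range n, a i) :
    (∃ i ∈ range n, x - (n - 1) * y < a i) ∨
      ∃ i ∈ range n, ∃ j ∈ range i, y < a i ∧ y < a j := by
  by_contra! hcon
  obtain ⟨hbig, hpair⟩ := hcon
  obtain ⟨i₀, hi₀, hmax⟩ := exists_max_image (range n) a (nonempty_range_iff.mpr hn.ne')
  have hsmall : ∀ j ∈ (range n).erase i₀, a j ≤ y := by
    intro j hj
    obtain ⟨hji₀, hj⟩ := mem_erase.mp hj
    by_contra! hyj
    rcases lt_or_gt_of_ne hji₀ with hlt | hgt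
    · exact (hpair i₀ hi₀ j (mem_range.mpr hlt) (hyj.trans_le (hmax j hj))).not_gt hyj
    · exact (hpair j hj i₀ (mem_range.mpr hgt) hyj).not_gt (hyj.trans_le (hmax j hj))
  have hrest : ∑ j ∈ (range n).erase i₀, a j ≤ (n - 1) * y := by
    calc ∑ j ∈ (range n).erase i₀, a j ≤ ∑ _j ∈ (range n).erase i₀, y := sum_le_sum hsmall
      _ = (n - 1) * y := by
        rw [sum_const, card_erase_of_mem hi₀, card_range, nsmul_eq_mul, Nat.cast_pred hn]
  have := hbig i₀ hi₀
  rw [← add_sum_erase _ _ hi₀] at h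
  linarith

theorem ENNReal.tsum_inv_two_pow_succ : ∑' j : ℕ, ((2 : ℝ≥0∞) ^ (j + 1))⁻¹ = 1 := by
  simp_rw [ENNReal.inv_pow, ENNReal.tsum_geometric_add_one, ENNReal.one_sub_inv_two, inv_inv]
  exact ENNReal.inv_mul_cancel two_ne_zero ENNReal.ofNat_ne_top

theorem lt_two_pow_succ_iff {k j : ℕ} {x : ℝ} (hkx : 2 ^ k ≤ x) (hxk : x < 2 ^ (k + 1)) :
    x < 2 ^ (j + 1) ↔ k ≤ j := by
  constructor
  · intro h
    exact Nat.lt_succ_iff.mp ((pow_lt_pow_iff_right₀ one_lt_two).mp (hkx.trans_lt h))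
  · intro h
    exact hxk.trans_le (pow_le_pow_right₀ one_le_two (by omega))

def IsStPetersburg_s6 {Ω : Type*} [MeasurableSpace Ω] (μ : Measure Ω) (Y : Ω → ℝ) : Prop :=
  ∀ k : ℕ, 1 ≤ k → μ {ω | Y ω = 2 ^ k} = ((2 : ℝ≥0∞) ^ k)⁻¹

namespace IsStPetersburg_s6

variable {Ω : Type*} [MeasurableSpace Ω] {μ : Measure Ω} {Y : Ω → ℝ}

theorem measure_iUnion_preimage_two_pow (h : IsStPetersburg_s6 μ Y) (hY : Measurable Y) (k : ℕ) :
    μ (⋃ m, Y ⁻¹' {(2 : ℝ) ^ (m + k + 1)}) = ((2 : ℝ≥0∞) ^ k)⁻¹ := by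
  have hdisj : Pairwise (Function.onFun Disjoint fun m => Y ⁻¹' {(2 : ℝ) ^ (m + k + 1)}) :=
    (pairwise_disjoint_fiber Y).comp_of_injective
      ((pow_right_injective₀ two_pos (by norm_num)).comp fun _ _ hij => by simpa using hij)
  rw [measure_iUnion hdisj fun _ => hY (measurableSet_singleton _)]
  calc ∑' m, μ (Y ⁻¹' {(2 : ℝ) ^ (m + k + 1)})
      = ∑' m, ((2 : ℝ≥0∞) ^ k)⁻¹ * ((2 : ℝ≥0∞) ^ (m + 1))⁻¹ := by
        refine tsum_congr fun m => ?_
        rw [← ENNReal.mul_inv (by simp) (by simp), ← pow_add, add_right_comm, add_comm k]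
        exact h _ (by omega)
    _ = ((2 : ℝ≥0∞) ^ k)⁻¹ := by
        rw [ENNReal.tsum_mul_left, ENNReal.tsum_inv_two_pow_succ, mul_one]

theorem ae_exists_eq_two_pow_s6 [IsProbabilityMeasure μ] (h : IsStPetersburg_s6 μ Y)
    (hY : Measurable Y) : ∀ᵐ ω ∂μ, ∃ j : ℕ, Y ω = 2 ^ (j + 1) := by
  have hmeas : MeasurableSet (⋃ j : ℕ, Y ⁻¹' {(2 : ℝ) ^ (j + 1)}) :=
    MeasurableSet.iUnion fun _ => hY (measurableSet_singleton _)
  have hfull : μ (⋃ j : ℕ, Y ⁻¹' {(2 : ℝ) ^ (j + 1)}) = 1 := by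
    simpa using h.measure_iUnion_preimage_two_pow hY 0
  filter_upwards [(mem_ae_iff_prob_eq_one hmeas).mpr hfull] with ω hω
  simpa using hω

theorem measure_lt [IsProbabilityMeasure μ] (h : IsStPetersburg_s6 μ Y) (hY : Measurable Y)
    {k : ℕ} {x : ℝ} (hkx : 2 ^ k ≤ x) (hxk : x < 2 ^ (k + 1)) :
    μ {ω | x < Y ω} = ((2 : ℝ≥0∞) ^ k)⁻¹ := by
  rw [← h.measure_iUnion_preimage_two_pow hY k]
  refine measure_congr ?_
  filter_upwards [h.ae_exists_eq_two_pow_s6 hY] with ω ⟨j, hj⟩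
  refine propext ?_
  change x < Y ω ↔ ω ∈ ⋃ m, Y ⁻¹' {(2 : ℝ) ^ (m + k + 1)}
  simp only [Set.mem_iUnion, Set.mem_preimage, Set.mem_singleton_iff, hj,
    lt_two_pow_succ_iff hkx hxk, pow_right_inj₀ two_pos (by norm_num : (2 : ℝ) ≠ 1)]
  exact ⟨fun hkj => ⟨j - k, by omega⟩, fun ⟨m, hm⟩ => by omega⟩

theorem measureReal_lt [IsProbabilityMeasure μ] (h : IsStPetersburg_s6 μ Y) (hY : Measurable Y)
    {k : ℕ} {x : ℝ} (hkx : 2 ^ k ≤ x) (hxk : x < 2 ^ (k + 1)) :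
    μ.real {ω | x < Y ω} = ((2 : ℝ) ^ k)⁻¹ := by
  simp [measureReal_def, h.measure_lt hY hkx hxk]

theorem measureReal_lt_eq [IsProbabilityMeasure μ] (h : IsStPetersburg_s6 μ Y) (hY : Measurable Y)
    {Y' : Ω → ℝ} (h' : IsStPetersburg_s6 μ Y') (hY' : Measurable Y') {x : ℝ} (hx : 1 ≤ x) :
    μ.real {ω | x < Y ω} = μ.real {ω | x < Y' ω} := by
  obtain ⟨k, hkx, hxk⟩ := exists_nat_pow_near hx one_lt_two
  rw [h.measureReal_lt hY hkx hxk, h'.measureReal_lt hY' hkx hxk]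

theorem mul_measureReal_lt_mem_Ico [IsProbabilityMeasure μ] (h : IsStPetersburg_s6 μ Y)
    (hY : Measurable Y) {x : ℝ} (hx : 1 ≤ x) :
    x * μ.real {ω | x < Y ω} ∈ Set.Ico 1 2 := by
  obtain ⟨k, hkx, hxk⟩ := exists_nat_pow_near hx one_lt_two
  have hpos : (0 : ℝ) < 2 ^ k := by positivity
  rw [h.measureReal_lt hY hkx hxk, ← div_eq_mul_inv, Set.mem_Ico, le_div_iff₀ hpos,
    div_lt_iff₀ hpos, one_mul, ← pow_succ']
  exact ⟨hkx, hxk⟩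

end IsStPetersburg_s6

section TailsOfSums

variable {Ω : Type*} [MeasurableSpace Ω] {μ : Measure Ω} {X : ℕ → Ω → ℝ}

theorem sum_measureReal_le_measureReal_biUnion_add [IsFiniteMeasure μ] {A : ℕ → Set Ω}
    (hA : ∀ i, MeasurableSet (A i)) (n : ℕ) :
    ∑ i ∈ range n, μ.real (A i) ≤
      μ.real (⋃ i ∈ range n, A i) + ∑ i ∈ range n, ∑ j ∈ range i, μ.real (A i ∩ A j) := by
  induction n with
  | zero => simp
  | succ n ih =>
    have hunion : μ.real (⋃ i ∈ range (n + 1), A i) + μ.real (A n ∩ ⋃ i ∈ range n, A i) =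
        μ.real (A n) + μ.real (⋃ i ∈ range n, A i) := by
      rw [range_add_one, set_biUnion_insert]
      exact measureReal_union_add_inter ((range n).measurableSet_biUnion fun i _ => hA i)
        (measure_ne_top μ _) (measure_ne_top μ _)
    have hinter : μ.real (A n ∩ ⋃ i ∈ range n, A i) ≤ ∑ j ∈ range n, μ.real (A n ∩ A j) := by
      rw [Set.inter_iUnion₂]
      exact measureReal_biUnion_finset_le _ _
    rw [sum_range_succ, sum_range_succ]
    linarith

theorem sum_sum_measureReal_inter_le (hindep : iIndepFun X μ) {y p : ℝ}
    (hp : ∀ i, μ.real {ω | y < X i ω} = p) (n : ℕ) :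
    ∑ i ∈ range n, ∑ j ∈ range i, μ.real ({ω | y < X i ω} ∩ {ω | y < X j ω}) ≤ n ^ 2 * p ^ 2 := by
  have hmul : ∀ i j, i ≠ j → μ.real ({ω | y < X i ω} ∩ {ω | y < X j ω}) = p ^ 2 := by
    intro i j hij
    have := (hindep.indepFun hij).measure_inter_preimage_eq_mul (Set.Ioi y) (Set.Ioi y)
      measurableSet_Ioi measurableSet_Ioi
    calc μ.real ({ω | y < X i ω} ∩ {ω | y < X j ω})
        = μ.real {ω | y < X i ω} * μ.real {ω | y < X j ω} := by
          rw [measureReal_def, measureReal_def, measureReal_def, ← ENNReal.toReal_mul]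
          exact congrArg ENNReal.toReal this
      _ = p ^ 2 := by rw [hp, hp, sq]
  calc ∑ i ∈ range n, ∑ j ∈ range i, μ.real ({ω | y < X i ω} ∩ {ω | y < X j ω})
      = ∑ i ∈ range n, (i : ℝ) * p ^ 2 := by
        refine sum_congr rfl fun i _ => ?_
        rw [sum_congr rfl fun j hj => hmul i j (mem_range.mp hj).ne', sum_const, card_range,
          nsmul_eq_mul]
    _ ≤ ∑ _i ∈ range n, (n : ℝ) * p ^ 2 := by
        gcongr with i hi
        exact_mod_cast (mem_range.mp hi).le
    _ = n ^ 2 * p ^ 2 := by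
        rw [sum_const, card_range, nsmul_eq_mul]
        ring

theorem sub_le_measureReal_lt_sum [IsFiniteMeasure μ] (hm : ∀ i, Measurable (X i))
    (hindep : iIndepFun X μ) (hnonneg : ∀ i, ∀ᵐ ω ∂μ, 0 ≤ X i ω) {x p : ℝ}
    (hp : ∀ i, μ.real {ω | x < X i ω} = p) (n : ℕ) :
    n * p - n ^ 2 * p ^ 2 ≤ μ.real {ω | x < ∑ i ∈ range n, X i ω} := by
  have hunion : μ.real (⋃ i ∈ range n, {ω | x < X i ω}) ≤
      μ.real {ω | x < ∑ i ∈ range n, X i ω} := by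
    refine ENNReal.toReal_mono (measure_ne_top _ _) (measure_mono_ae ?_)
    filter_upwards [ae_all_iff.mpr hnonneg] with ω hω hmem
    obtain ⟨i, hi, hxi⟩ := Set.mem_iUnion₂.mp hmem
    exact (hxi : x < X i ω).trans_le (single_le_sum (fun j _ => hω j) hi)
  have hbonf := sum_measureReal_le_measureReal_biUnion_add (μ := μ)
    (A := fun i => {ω | x < X i ω}) (fun i => measurableSet_lt measurable_const (hm i)) n
  have hpairs := sum_sum_measureReal_inter_le hindep hp n
  simp only [hp, sum_const, card_range, nsmul_eq_mul] at hbonf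
  linarith

theorem measureReal_lt_sum_le [IsFiniteMeasure μ] (hindep : iIndepFun X μ) {n : ℕ} (hn : 0 < n)
    {x y p q : ℝ} (hq : ∀ i, μ.real {ω | x - (n - 1) * y < X i ω} = q)
    (hp : ∀ i, μ.real {ω | y < X i ω} = p) :
    μ.real {ω | x < ∑ i ∈ range n, X i ω} ≤ n * q + n ^ 2 * p ^ 2 := by
  have hsub : {ω | x < ∑ i ∈ range n, X i ω} ⊆
      (⋃ i ∈ range n, {ω | x - (n - 1) * y < X i ω}) ∪
        ⋃ i ∈ range n, ⋃ j ∈ range i, {ω | y < X i ω} ∩ {ω | y < X j ω} := by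
    intro ω hω
    rcases exists_lt_sub_or_exists_two_lt_of_lt_sum hn y hω with
      ⟨i, hi, hbig⟩ | ⟨i, hi, j, hj, hpair⟩
    · exact Or.inl (Set.mem_biUnion hi hbig)
    · exact Or.inr (Set.mem_biUnion hi (Set.mem_biUnion hj hpair))
  have hbig : μ.real (⋃ i ∈ range n, {ω | x - (n - 1) * y < X i ω}) ≤ n * q := by
    simpa [hq] using measureReal_biUnion_finset_le (μ := μ) (range n)
      fun i => {ω | x - (n - 1) * y < X i ω}
  have hpairs : μ.real (⋃ i ∈ range n, ⋃ j ∈ range i, {ω | y < X i ω} ∩ {ω | y < X j ω}) ≤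
      n ^ 2 * p ^ 2 :=
    calc _ ≤ ∑ i ∈ range n, μ.real (⋃ j ∈ range i, {ω | y < X i ω} ∩ {ω | y < X j ω}) :=
          measureReal_biUnion_finset_le _ _
      _ ≤ ∑ i ∈ range n, ∑ j ∈ range i, μ.real ({ω | y < X i ω} ∩ {ω | y < X j ω}) :=
          sum_le_sum fun i _ => measureReal_biUnion_finset_le _ _
      _ ≤ n ^ 2 * p ^ 2 := sum_sum_measureReal_inter_le hindep hp n
  calc μ.real {ω | x < ∑ i ∈ range n, X i ω}
      ≤ μ.real ((⋃ i ∈ range n, {ω | x - (n - 1) * y < X i ω}) ∪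
          ⋃ i ∈ range n, ⋃ j ∈ range i, {ω | y < X i ω} ∩ {ω | y < X j ω}) :=
        measureReal_mono hsub
    _ ≤ n * q + n ^ 2 * p ^ 2 := (measureReal_union_le _ _).trans (add_le_add hbig hpairs)

end TailsOfSums

section StPetersburgSum

variable {Ω : Type*} [MeasurableSpace Ω] {μ : Measure Ω} [IsProbabilityMeasure μ]
  {X : ℕ → Ω → ℝ}

theorem sub_le_mul_measureReal_lt_sum (hm : ∀ i, Measurable (X i)) (hindep : iIndepFun X μ)
    (hd : ∀ i, IsStPetersburg_s6 μ (X i)) (n : ℕ) {x : ℝ} (hx : 1 ≤ x) :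
    n * (x * μ.real {ω | x < X 0 ω}) - 4 * n ^ 2 / x ≤
      x * μ.real {ω | x < ∑ i ∈ range n, X i ω} := by
  set p := μ.real {ω | x < X 0 ω}
  have hnonneg : ∀ i, ∀ᵐ ω ∂μ, 0 ≤ X i ω := fun i =>
    ((hd i).ae_exists_eq_two_pow_s6 (hm i)).mono fun ω ⟨j, hj⟩ => hj ▸ by positivity
  have hsum := sub_le_measureReal_lt_sum hm hindep hnonneg
    (fun i => (hd i).measureReal_lt_eq (hm i) (hd 0) (hm 0) hx) n
  have hG := (hd 0).mul_measureReal_lt_mem_Ico (hm 0) hx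
  have hsq : x * (n ^ 2 * p ^ 2) ≤ 4 * n ^ 2 / x := by
    have : (x * p) ^ 2 ≤ 4 := by nlinarith [hG.1, hG.2]
    calc x * (n ^ 2 * p ^ 2) = n ^ 2 * (x * p) ^ 2 / x := by field_simp
      _ ≤ n ^ 2 * 4 / x := by gcongr
      _ = 4 * n ^ 2 / x := by ring
  calc n * (x * p) - 4 * n ^ 2 / x ≤ x * (n * p - n ^ 2 * p ^ 2) := by nlinarith
    _ ≤ x * μ.real {ω | x < ∑ i ∈ range n, X i ω} := by gcongr

theorem mul_measureReal_lt_sum_le (hm : ∀ i, Measurable (X i)) (hindep : iIndepFun X μ)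
    (hd : ∀ i, IsStPetersburg_s6 μ (X i)) {n : ℕ} (hn : 0 < n) {η x : ℝ} (hη : 0 < η)
    (hηx : 1 ≤ η * x) (hcx : 1 ≤ (1 - (n - 1) * η) * x) :
    x * μ.real {ω | x < ∑ i ∈ range n, X i ω} ≤
      n * (x * μ.real {ω | (1 - (n - 1) * η) * x < X 0 ω}) + 4 * n ^ 2 / (η ^ 2 * x) := by
  set p := μ.real {ω | η * x < X 0 ω}
  have hx0 : 0 < x := pos_of_mul_pos_right (one_pos.trans_le hηx) hη.le
  have hq : ∀ i, μ.real {ω | x - (n - 1) * (η * x) < X i ω} =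
      μ.real {ω | (1 - (n - 1) * η) * x < X 0 ω} := by
    intro i
    rw [show x - (n - 1) * (η * x) = (1 - (n - 1) * η) * x by ring]
    exact (hd i).measureReal_lt_eq (hm i) (hd 0) (hm 0) hcx
  have hsum := measureReal_lt_sum_le hindep hn hq
    (fun i => (hd i).measureReal_lt_eq (hm i) (hd 0) (hm 0) hηx)
  have hG := (hd 0).mul_measureReal_lt_mem_Ico (hm 0) hηx
  have hsq : x * (n ^ 2 * p ^ 2) ≤ 4 * n ^ 2 / (η ^ 2 * x) := by
    have : (η * x * p) ^ 2 ≤ 4 := by nlinarith [hG.1, hG.2]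
    calc x * (n ^ 2 * p ^ 2) = n ^ 2 * (η * x * p) ^ 2 / (η ^ 2 * x) := by field_simp
      _ ≤ n ^ 2 * 4 / (η ^ 2 * x) := by gcongr
      _ = 4 * n ^ 2 / (η ^ 2 * x) := by ring
  calc x * μ.real {ω | x < ∑ i ∈ range n, X i ω}
      ≤ x * (n * μ.real {ω | (1 - (n - 1) * η) * x < X 0 ω} + n ^ 2 * p ^ 2) := by gcongr
    _ ≤ _ := by nlinarith

theorem eventually_sub_le_mul_measureReal_lt_sum (hm : ∀ i, Measurable (X i))
    (hindep : iIndepFun X μ) (hd : ∀ i, IsStPetersburg_s6 μ (X i)) (n : ℕ) {ε : ℝ} (hε : 0 < ε) :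
    ∀ᶠ x in atTop, n - ε ≤ x * μ.real {ω | x < ∑ i ∈ range n, X i ω} := by
  have he : Tendsto (fun x : ℝ => 4 * n ^ 2 / x) atTop (𝓝 0) :=
    tendsto_const_nhds.div_atTop tendsto_id
  filter_upwards [eventually_ge_atTop 1, he.eventually (gt_mem_nhds hε)] with x hx hex
  have hlower := sub_le_mul_measureReal_lt_sum hm hindep hd n hx
  have hG := mul_le_mul_of_nonneg_left ((hd 0).mul_measureReal_lt_mem_Ico (hm 0) hx).1
    (Nat.cast_nonneg n)
  linarith

theorem frequently_sub_le_mul_measureReal_lt_sum (hm : ∀ i, Measurable (X i))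
    (hindep : iIndepFun X μ) (hd : ∀ i, IsStPetersburg_s6 μ (X i)) (n : ℕ) {ε : ℝ} (hε : 0 < ε) :
    ∃ᶠ x in atTop, 2 * n - ε ≤ x * μ.real {ω | x < ∑ i ∈ range n, X i ω} := by
  have hpow : Tendsto (fun k : ℕ => (2 : ℝ) ^ k) atTop atTop :=
    tendsto_pow_atTop_atTop_of_one_lt one_lt_two
  have hu : Tendsto (fun k : ℕ => 2 * 2 ^ k - 1 : ℕ → ℝ) atTop atTop :=
    tendsto_atTop_add_const_right _ _ (hpow.const_mul_atTop two_pos)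
  have he₁ : Tendsto (fun k : ℕ => n / 2 ^ k : ℕ → ℝ) atTop (𝓝 0) :=
    tendsto_const_nhds.div_atTop hpow
  have he₂ : Tendsto (fun k : ℕ => 4 * n ^ 2 / (2 * 2 ^ k - 1) : ℕ → ℝ) atTop (𝓝 0) :=
    tendsto_const_nhds.div_atTop hu
  refine hu.frequently (Eventually.frequently ?_)
  filter_upwards [he₁.eventually (gt_mem_nhds (half_pos hε)),
    he₂.eventually (gt_mem_nhds (half_pos hε))] with k hk₁ hk₂
  have hone : (1 : ℝ) ≤ 2 ^ k := one_le_pow₀ one_le_two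
  have hlower := sub_le_mul_measureReal_lt_sum hm hindep hd n (x := 2 * 2 ^ k - 1) (by linarith)
  rw [(hd 0).measureReal_lt (hm 0) (by linarith) (by rw [pow_succ']; linarith)] at hlower
  have hval : (2 * 2 ^ k - 1) * ((2 : ℝ) ^ k)⁻¹ = 2 - 1 / 2 ^ k := by field_simp
  rw [hval] at hlower
  have : (n : ℝ) * (2 - 1 / 2 ^ k) = 2 * n - n / 2 ^ k := by ring
  linarith

theorem eventually_mul_measureReal_lt_sum_le (hm : ∀ i, Measurable (X i))
    (hindep : iIndepFun X μ) (hd : ∀ i, IsStPetersburg_s6 μ (X i)) {n : ℕ} (hn : 0 < n) {ε : ℝ}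
    (hε : 0 < ε) :
    ∀ᶠ x in atTop, x * μ.real {ω | x < ∑ i ∈ range n, X i ω} ≤ 2 * n + ε := by
  obtain ⟨η, hη, hηn, hK⟩ :=
    exists_pos_mul_lt_half_and_div_one_sub_mul_lt ((n : ℝ) - 1) (2 * n) (half_pos hε)
  set c := 1 - ((n : ℝ) - 1) * η
  have hc : 1 / 2 < c := by linarith
  have he : Tendsto (fun x : ℝ => 4 * n ^ 2 / (η ^ 2 * x)) atTop (𝓝 0) :=
    tendsto_const_nhds.div_atTop (tendsto_id.const_mul_atTop (by positivity))
  filter_upwards [eventually_ge_atTop (1 / η), eventually_ge_atTop 2,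
    he.eventually (gt_mem_nhds (half_pos hε))] with x hηx hx hex
  have hcx : 1 ≤ c * x := by nlinarith
  have hupper : x * μ.real {ω | x < ∑ i ∈ range n, X i ω} ≤
      n * (x * μ.real {ω | c * x < X 0 ω}) + 4 * n ^ 2 / (η ^ 2 * x) :=
    mul_measureReal_lt_sum_le hm hindep hd hn hη ((div_le_iff₀' hη).mp hηx) hcx
  have hG : x * μ.real {ω | c * x < X 0 ω} ≤ 2 / c := by
    rw [le_div_iff₀ (by linarith)]
    nlinarith [((hd 0).mul_measureReal_lt_mem_Ico (hm 0) hcx).2]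
  have : n * (x * μ.real {ω | c * x < X 0 ω}) ≤ 2 * n / c :=
    calc n * (x * μ.real {ω | c * x < X 0 ω}) ≤ n * (2 / c) := by gcongr
      _ = 2 * n / c := by ring
  linarith

theorem frequently_mul_measureReal_lt_sum_le (hm : ∀ i, Measurable (X i))
    (hindep : iIndepFun X μ) (hd : ∀ i, IsStPetersburg_s6 μ (X i)) {n : ℕ} (hn : 0 < n) {ε : ℝ}
    (hε : 0 < ε) :
    ∃ᶠ x in atTop, x * μ.real {ω | x < ∑ i ∈ range n, X i ω} ≤ n + ε := by
  obtain ⟨η, hη, hηn, hK⟩ :=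
    exists_pos_mul_lt_half_and_div_one_sub_mul_lt ((n : ℝ) - 1) n (half_pos hε)
  set c := 1 - ((n : ℝ) - 1) * η
  have hc : 0 < c := by linarith
  have hu : Tendsto (fun k : ℕ => 2 ^ k / c : ℕ → ℝ) atTop atTop :=
    (tendsto_pow_atTop_atTop_of_one_lt one_lt_two).atTop_div_const hc
  have he : Tendsto (fun k : ℕ => 4 * n ^ 2 / (η ^ 2 * (2 ^ k / c)) : ℕ → ℝ) atTop (𝓝 0) :=
    tendsto_const_nhds.div_atTop (hu.const_mul_atTop (by positivity))
  refine hu.frequently (Eventually.frequently ?_)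
  filter_upwards [hu.eventually_ge_atTop (1 / η), he.eventually (gt_mem_nhds (half_pos hε))]
    with k hηx hek
  have hcx : c * (2 ^ k / c) = 2 ^ k := mul_div_cancel₀ _ hc.ne'
  have hupper : 2 ^ k / c * μ.real {ω | 2 ^ k / c < ∑ i ∈ range n, X i ω} ≤
      n * (2 ^ k / c * μ.real {ω | c * (2 ^ k / c) < X 0 ω}) +
        4 * n ^ 2 / (η ^ 2 * (2 ^ k / c)) :=
    mul_measureReal_lt_sum_le hm hindep hd hn hη ((div_le_iff₀' hη).mp hηx)
      (by rw [hcx]; exact one_le_pow₀ one_le_two)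
  have hval : 2 ^ k / c * ((2 : ℝ) ^ k)⁻¹ = 1 / c := by field_simp
  rw [hcx, (hd 0).measureReal_lt (hm 0) le_rfl (pow_lt_pow_right₀ one_lt_two k.lt_succ_self),
    hval] at hupper
  have : (n : ℝ) * (1 / c) = n / c := by ring
  linarith

end StPetersburgSum

/-- For `Sₙ` the sum of `n` i.i.d. St. Petersburg random variables and `n ≥ 1`:
`liminf_{x→∞} x·P{Sₙ > x} = n` and `limsup_{x→∞} x·P{Sₙ > x} = 2n`. -/
theorem stmt_6 {Ω : Type*} [MeasurableSpace Ω] (μ : Measure Ω) [IsProbabilityMeasure μ]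
    (X : ℕ → Ω → ℝ) (hm : ∀ i, Measurable (X i))
    (hindep : iIndepFun X μ)
    (hd : ∀ i, ∀ k : ℕ, 1 ≤ k → μ {ω | X i ω = 2 ^ k} = ((2 : ℝ≥0∞) ^ k)⁻¹)
    (n : ℕ) (hn : 1 ≤ n) :
    liminf (fun x : ℝ =>
        x * (μ {ω | x < ∑ i ∈ Finset.range n, X i ω}).toReal) atTop = n ∧
    limsup (fun x : ℝ =>
        x * (μ {ω | x < ∑ i ∈ Finset.range n, X i ω}).toReal) atTop = 2 * n :=
  ⟨liminf_eq_of_forall_pos (fun _ hε => eventually_sub_le_mul_measureReal_lt_sum hm hindep hd n hε)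
    (fun _ hε => frequently_mul_measureReal_lt_sum_le hm hindep hd hn hε),
  limsup_eq_of_forall_pos (fun _ hε => eventually_mul_measureReal_lt_sum_le hm hindep hd hn hε)
    (fun _ hε => frequently_sub_le_mul_measureReal_lt_sum hm hindep hd n hε)⟩
end

section
/- Let U_{1,n} ≤ … ≤ U_{n,n} be the order statistics of n i.i.d. Uniform(0,1) random variables and Ψ(x) = 2^{{log₂ x}}. For 0 ≤ r < n, P{Ψ(U_{r+1,n})/U_{r+1,n} > x} = P{U_{r+1,n} < 2^{-⌊log₂ x⌋}} ~ C(n, r+1) · 2^{(r+1){log₂ x}} / x^{r+1} as x → ∞, where C(n,r+1) is the binomial coefficient. -/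
/-!
Since `Ψ(u)/u = 2^{-⌊log₂ u⌋}`, the event `Ψ(U_{r+1,n})/U_{r+1,n} > x` is the event
`U_{r+1,n} < y` with `y = 2^{-⌊log₂ x⌋}`, i.e. that at least `r+1` of the `U_i` fall below `y`.
Independence bounds its probability between `C(n,r+1) y^{r+1} (1-y)^{n-r-1}` (exactly `r+1`
fall below `y`) and `C(n,r+1) y^{r+1}` (a union bound over `(r+1)`-subsets), and
`y = 2^{{log₂ x}}/x → 0`, so the ratio to `C(n,r+1) y^{r+1}` tends to `1`.
-/

open MeasureTheory ProbabilityTheory Filter Topology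
open scoped ENNReal

/-- The `(r+1)`-st order statistic (the `(r+1)`-st smallest value) of the family
`U i`, defined as `inf {t : #{i : U i ω ≤ t} ≥ r+1}`. -/
noncomputable def orderStat {Ω : Type*} {n : ℕ} (U : Fin n → Ω → ℝ) (r : ℕ) (ω : Ω) : ℝ :=
  sInf {t : ℝ | r + 1 ≤ {i : Fin n | U i ω ≤ t}.ncard}

namespace Real

variable {b x u : ℝ}

theorem lt_zpow_iff_floor_logb_lt (hb : 1 < b) (hx : 0 < x) (m : ℤ) :
    x < b ^ m ↔ ⌊logb b x⌋ < m := by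
  rw [Int.floor_lt, logb_lt_iff_lt_rpow hb hx, rpow_intCast]

theorem lt_zpow_neg_floor_logb_comm (hb : 1 < b) (hu : 0 < u) (hx : 0 < x) :
    x < b ^ (-⌊logb b u⌋) ↔ u < b ^ (-⌊logb b x⌋) := by
  rw [lt_zpow_iff_floor_logb_lt hb hx, lt_zpow_iff_floor_logb_lt hb hu]
  omega

theorem rpow_fract_logb_div_self (hb : 0 < b) (hb₁ : b ≠ 1) (hu : 0 < u) :
    b ^ Int.fract (logb b u) / u = b ^ (-⌊logb b u⌋) := by
  rw [Int.fract, rpow_sub hb, rpow_logb hb hb₁ hu, rpow_intCast, zpow_neg]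
  field_simp

theorem rpow_mul_fract_logb_div_pow (hb : 0 < b) (hb₁ : b ≠ 1) (hx : 0 < x) (k : ℕ) :
    b ^ (k * Int.fract (logb b x)) / x ^ k = (b ^ (-⌊logb b x⌋)) ^ k := by
  rw [mul_comm, rpow_mul_natCast hb.le, ← div_pow, rpow_fract_logb_div_self hb hb₁ hx]

theorem zpow_neg_floor_logb_le_div (hb : 1 < b) (hx : 0 < x) :
    b ^ (-⌊logb b x⌋) ≤ b / x := by
  rw [← rpow_fract_logb_div_self (by positivity) hb.ne' hx]
  gcongr
  exact rpow_le_self_of_one_le hb.le (Int.fract_lt_one _).le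

theorem zpow_neg_floor_logb_le_one (hb : 1 < b) (hx : 1 ≤ x) : b ^ (-⌊logb b x⌋) ≤ 1 :=
  zpow_le_one_of_nonpos₀ hb.le
    (neg_nonpos.2 (Int.floor_nonneg.2 (logb_nonneg hb hx)))

theorem tendsto_zpow_neg_floor_logb_atTop (hb : 1 < b) :
    Tendsto (fun x => b ^ (-⌊logb b x⌋)) atTop (𝓝 0) := by
  refine squeeze_zero' (g := fun x => b / x)
    (Eventually.of_forall fun x => (zpow_pos (by positivity) _).le) ?_
    (tendsto_const_nhds.div_atTop tendsto_id)
  filter_upwards [eventually_gt_atTop 0] with x hx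
  exact zpow_neg_floor_logb_le_div hb hx

end Real

section OrderStatistic

variable {Ω : Type*} {n r : ℕ} (U : Fin n → Ω → ℝ) (ω : Ω)

theorem orderStat_lt_iff (hr : r < n) (t : ℝ) :
    orderStat U r ω < t ↔ r + 1 ≤ {i | U i ω < t}.ncard := by
  have hne : (Finset.univ : Finset (Fin n)).Nonempty := ⟨⟨r, hr⟩, Finset.mem_univ _⟩
  set S := {t : ℝ | r + 1 ≤ {i : Fin n | U i ω ≤ t}.ncard}
  have hbdd : BddBelow S := by
    refine ⟨Finset.univ.inf' hne (U · ω), fun s hs => ?_⟩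
    obtain ⟨i, hi⟩ : {i | U i ω ≤ s}.Nonempty := Set.nonempty_of_ncard_ne_zero (by
      simp only [S, Set.mem_ofPred_eq] at hs; omega)
    exact (Finset.inf'_le _ (Finset.mem_univ i)).trans hi
  have hSne : S.Nonempty := by
    refine ⟨Finset.univ.sup' hne (U · ω), ?_⟩
    have hall : {i | U i ω ≤ Finset.univ.sup' hne (U · ω)} = Set.univ :=
      Set.eq_univ_of_forall fun i => Finset.le_sup' (U · ω) (Finset.mem_univ i)
    simp only [S, Set.mem_ofPred_eq, hall, Set.ncard_univ, Nat.card_eq_fintype_card,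
      Fintype.card_fin]
    omega
  constructor
  · intro h
    obtain ⟨s, hs, hst⟩ := (csInf_lt_iff hbdd hSne).1 h
    exact hs.trans (Set.ncard_le_ncard fun i hi => lt_of_le_of_lt hi hst)
  · intro h
    set T := Finset.univ.filter (U · ω < t)
    have hT : {i | U i ω < t} = ↑T := by ext; simp [T]
    rw [hT, Set.ncard_coe_finset] at h
    have hTne : T.Nonempty := Finset.card_pos.1 (by omega)
    have hsS : T.sup' hTne (U · ω) ∈ S :=
      (h.trans_eq (Set.ncard_coe_finset T).symm).trans
        (Set.ncard_le_ncard fun i hi => Finset.le_sup' (U · ω) hi)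
    exact (csInf_le hbdd hsS).trans_lt
      ((Finset.sup'_lt_iff hTne).2 fun i hi => (Finset.mem_filter.1 hi).2)

theorem orderStat_pos (hr : r < n) (hU : ∀ i, 0 < U i ω) : 0 < orderStat U r ω := by
  have hne : (Finset.univ : Finset (Fin n)).Nonempty := ⟨⟨r, hr⟩, Finset.mem_univ _⟩
  set m := Finset.univ.inf' hne (U · ω)
  have hm : 0 < m := (Finset.lt_inf'_iff hne).2 fun i _ => hU i
  have hempty : {i | U i ω < m} = ∅ :=
    Set.eq_empty_of_forall_notMem fun i hi => (Finset.inf'_le (U · ω) (Finset.mem_univ i)).not_gt hi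
  have : ¬ orderStat U r ω < m := by simp [orderStat_lt_iff U ω hr, hempty]
  exact hm.trans_le (not_lt.1 this)

end OrderStatistic

theorem ProbabilityTheory.iIndepFun.iIndepSet_preimage {Ω ι β : Type*} [MeasurableSpace Ω]
    {μ : Measure Ω} [MeasurableSpace β] {f : ι → Ω → β}
    (hf : iIndepFun f μ) {s : Set β} (hs : MeasurableSet s) :
    iIndepSet (fun i => f i ⁻¹' s) μ :=
  (iIndepSet_iff_iIndep _ _).2 <| iIndep_of_iIndep_of_le ((iIndepFun_iff_iIndep _ _ _).1 hf)
    fun _ => MeasurableSpace.generateFrom_le fun _ ht => ht ▸ ⟨s, hs, rfl⟩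

section Binomial

variable {Ω ι : Type*} [MeasurableSpace Ω] {μ : Measure Ω} [Fintype ι]
  {A : ι → Set Ω} {p : ℝ≥0∞}

theorem measure_le_ncard_le_choose_mul_pow (hA : iIndepSet A μ) (hp : ∀ i, μ (A i) = p) (k : ℕ) :
    μ {ω | k ≤ {i | ω ∈ A i}.ncard} ≤ (Fintype.card ι).choose k * p ^ k := by
  have hsub : {ω | k ≤ {i | ω ∈ A i}.ncard} ⊆
      ⋃ S ∈ Finset.powersetCard k Finset.univ, ⋂ i ∈ S, A i := by
    intro ω hω
    obtain ⟨T, hT, hTk⟩ := Set.exists_subset_card_eq hω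
    refine Set.mem_biUnion (x := T.toFinite.toFinset) (Finset.mem_powersetCard.2
      ⟨Finset.subset_univ _, by rw [← Set.ncard_eq_toFinset_card, hTk]⟩) ?_
    exact Set.mem_iInter₂.2 fun i hi => hT (Set.Finite.mem_toFinset _ |>.1 hi)
  calc μ {ω | k ≤ {i | ω ∈ A i}.ncard}
      ≤ ∑ S ∈ Finset.powersetCard k Finset.univ, μ (⋂ i ∈ S, A i) :=
        (measure_mono hsub).trans (measure_biUnion_finset_le _ _)
    _ = ∑ _S ∈ Finset.powersetCard k (Finset.univ : Finset ι), p ^ k := by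
        refine Finset.sum_congr rfl fun S hS => ?_
        rw [hA.meas_biInter, Finset.prod_congr rfl fun i _ => hp i, Finset.prod_const,
          (Finset.mem_powersetCard.1 hS).2]
    _ = (Fintype.card ι).choose k * p ^ k := by
        rw [Finset.sum_const, Finset.card_powersetCard, Finset.card_univ, nsmul_eq_mul]

theorem choose_mul_pow_mul_le_measure_le_ncard (hA : iIndepSet A μ)
    (hAm : ∀ i, MeasurableSet (A i)) (hp : ∀ i, μ (A i) = p) (k : ℕ) :
    (Fintype.card ι).choose k * p ^ k * (1 - p) ^ (Fintype.card ι - k) ≤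
      μ {ω | k ≤ {i | ω ∈ A i}.ncard} := by
  classical
  have := hA.isProbabilityMeasure
  set P := Finset.powersetCard k (Finset.univ : Finset ι)
  set E : Finset ι → Set Ω := fun S => ⋂ i, if i ∈ S then A i else (A i)ᶜ
  have hEm : ∀ S, MeasurableSet (E S) := fun S =>
    .iInter fun i => by split_ifs; exacts [hAm i, (hAm i).compl]
  have hE : ∀ S ∈ P, μ (E S) = p ^ k * (1 - p) ^ (Fintype.card ι - k) := by
    intro S hS
    have hSk := (Finset.mem_powersetCard.1 hS).2
    have hin : ∏ i ∈ S, μ (if i ∈ S then A i else (A i)ᶜ) = p ^ k := by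
      rw [Finset.prod_congr rfl fun i hi => by rw [if_pos hi, hp], Finset.prod_const, hSk]
    have hout : ∏ i ∈ Sᶜ, μ (if i ∈ S then A i else (A i)ᶜ) =
        (1 - p) ^ (Fintype.card ι - k) := by
      rw [Finset.prod_congr rfl fun i hi => by
          rw [if_neg (Finset.mem_compl.1 hi), prob_compl_eq_one_sub (hAm i), hp],
        Finset.prod_const, Finset.card_compl, hSk]
    have hgen : ∀ i, MeasurableSet[MeasurableSpace.generateFrom {A i}] (A i) := fun i =>
      MeasurableSpace.measurableSet_generateFrom (Set.mem_singleton _)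
    rw [((iIndepSet_iff_iIndep _ _).1 hA).meas_iInter fun i => by
      split_ifs
      exacts [hgen i, (hgen i).compl], ← Finset.prod_mul_prod_compl S, hin, hout]
  have hdisj : (P : Set (Finset ι)).PairwiseDisjoint E := by
    intro S hS T hT hST
    obtain ⟨i, hiS, hiT⟩ := Finset.not_subset.1 fun h => hST <|
      Finset.eq_of_subset_of_card_le h ((Finset.mem_powersetCard.1 hT).2.trans
        (Finset.mem_powersetCard.1 hS).2.symm).le
    refine Set.disjoint_left.2 fun ω hωS hωT => ?_
    have h₁ := Set.mem_iInter.1 hωS i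
    have h₂ := Set.mem_iInter.1 hωT i
    rw [if_pos hiS] at h₁
    rw [if_neg hiT] at h₂
    exact h₂ h₁
  have hEsub : ∀ S ∈ P, E S ⊆ {ω | k ≤ {i | ω ∈ A i}.ncard} := by
    intro S hS ω hω
    rw [Set.mem_ofPred_eq, ← (Finset.mem_powersetCard.1 hS).2, ← Set.ncard_coe_finset]
    refine Set.ncard_le_ncard fun i hi => ?_
    simpa [if_pos (Finset.mem_coe.1 hi)] using Set.mem_iInter.1 hω i
  calc (Fintype.card ι).choose k * p ^ k * (1 - p) ^ (Fintype.card ι - k)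
      = ∑ S ∈ P, μ (E S) := by
        rw [Finset.sum_congr rfl hE, Finset.sum_const, Finset.card_powersetCard,
          Finset.card_univ, nsmul_eq_mul, mul_assoc]
    _ = μ (⋃ S ∈ P, E S) := (measure_biUnion_finset hdisj fun S _ => hEm S).symm
    _ ≤ _ := measure_mono (Set.iUnion₂_subset hEsub)

end Binomial

section Uniform

variable {Ω : Type*} [MeasurableSpace Ω] {μ : Measure Ω}

theorem ae_mem_of_map_eq_restrict {β : Type*} [MeasurableSpace β] {ν : Measure β} {s : Set β}
    {X : Ω → β} (hX : Measurable X) (hs : MeasurableSet s) (hd : μ.map X = ν.restrict s) :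
    ∀ᵐ ω ∂μ, X ω ∈ s :=
  ae_of_ae_map hX.aemeasurable (hd ▸ ae_restrict_mem hs)

theorem measure_preimage_Iio_of_map_eq_uniform {X : Ω → ℝ} (hX : Measurable X)
    (hd : μ.map X = volume.restrict (Set.Ioo 0 1)) {y : ℝ} (hy : y ≤ 1) :
    μ (X ⁻¹' Set.Iio y) = ENNReal.ofReal y := by
  rw [← Measure.map_apply hX measurableSet_Iio, hd, Measure.restrict_apply measurableSet_Iio,
    Set.Iio_inter_Ioo, min_eq_left hy, Real.volume_Ioo, sub_zero]

variable {n r : ℕ} {U : Fin n → Ω → ℝ}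

theorem measure_orderStat_lt_eq (hr : r < n) (y : ℝ) :
    μ {ω | orderStat U r ω < y} = μ {ω | r + 1 ≤ {i | ω ∈ U i ⁻¹' Set.Iio y}.ncard} := by
  simp only [orderStat_lt_iff U _ hr]
  rfl

theorem measure_lt_rpow_fract_logb_div_orderStat (hm : ∀ i, Measurable (U i))
    (hd : ∀ i, μ.map (U i) = volume.restrict (Set.Ioo 0 1)) (hr : r < n) (x : ℝ) (hx : 0 < x) :
    μ {ω | x < (2 : ℝ) ^ Int.fract (Real.logb 2 (orderStat U r ω)) / orderStat U r ω} =
      μ {ω | orderStat U r ω < (2 : ℝ) ^ (-⌊Real.logb 2 x⌋)} := by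
  refine measure_congr (eventuallyEq_set.2 ?_)
  filter_upwards [ae_all_iff.2 fun i => ae_mem_of_map_eq_restrict (hm i) measurableSet_Ioo (hd i)]
    with ω hω
  have hpos := orderStat_pos U ω hr fun i => (hω i).1
  rw [Real.rpow_fract_logb_div_self two_pos (by norm_num) hpos,
    Real.lt_zpow_neg_floor_logb_comm one_lt_two hpos hx]

variable (hm : ∀ i, Measurable (U i)) (hindep : iIndepFun U μ)
  (hd : ∀ i, μ.map (U i) = volume.restrict (Set.Ioo 0 1))
include hm hindep hd

theorem choose_mul_pow_mul_le_measureReal_orderStat_lt (hr : r < n) {y : ℝ} (hy₀ : 0 ≤ y)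
    (hy₁ : y ≤ 1) :
    n.choose (r + 1) * y ^ (r + 1) * (1 - y) ^ (n - (r + 1)) ≤
      μ.real {ω | orderStat U r ω < y} := by
  have h := choose_mul_pow_mul_le_measure_le_ncard (hindep.iIndepSet_preimage measurableSet_Iio)
    (fun i => (hm i) measurableSet_Iio)
    (fun i => measure_preimage_Iio_of_map_eq_uniform (hm i) (hd i) hy₁) (r + 1)
  rw [Fintype.card_fin, ← measure_orderStat_lt_eq hr, ← ENNReal.ofReal_one,
    ← ENNReal.ofReal_sub _ hy₀, ← ENNReal.ofReal_natCast, ← ENNReal.ofReal_pow hy₀,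
    ← ENNReal.ofReal_pow (by linarith), ← ENNReal.ofReal_mul (by positivity),
    ← ENNReal.ofReal_mul (by positivity)] at h
  have := hindep.isProbabilityMeasure
  exact (ENNReal.ofReal_le_iff_le_toReal (measure_ne_top _ _)).1 h

theorem measureReal_orderStat_lt_le_choose_mul_pow (hr : r < n) {y : ℝ} (hy₀ : 0 ≤ y)
    (hy₁ : y ≤ 1) :
    μ.real {ω | orderStat U r ω < y} ≤ n.choose (r + 1) * y ^ (r + 1) := by
  have h := measure_le_ncard_le_choose_mul_pow (hindep.iIndepSet_preimage measurableSet_Iio)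
    (fun i => measure_preimage_Iio_of_map_eq_uniform (hm i) (hd i) hy₁) (r + 1)
  rw [Fintype.card_fin, ← measure_orderStat_lt_eq hr, ← ENNReal.ofReal_natCast,
    ← ENNReal.ofReal_pow hy₀, ← ENNReal.ofReal_mul (by positivity)] at h
  exact ENNReal.toReal_le_of_le_ofReal (by positivity) h

end Uniform

theorem stmt_16_general {Ω : Type*} [MeasurableSpace Ω] (μ : Measure Ω)
    (n : ℕ) (U : Fin n → Ω → ℝ) (hm : ∀ i, Measurable (U i))
    (hindep : iIndepFun U μ)
    (hd : ∀ i, μ.map (U i) = volume.restrict (Set.Ioo (0 : ℝ) 1))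
    (r : ℕ) (hr : r < n) :
    (∀ x : ℝ, 0 < x →
      μ {ω | x < (2 : ℝ) ^ Int.fract (Real.logb 2 (orderStat U r ω)) / orderStat U r ω} =
        μ {ω | orderStat U r ω < (2 : ℝ) ^ (-⌊Real.logb 2 x⌋)}) ∧
    Tendsto (fun x : ℝ =>
        (μ {ω | x < (2 : ℝ) ^ Int.fract (Real.logb 2 (orderStat U r ω)) /
            orderStat U r ω}).toReal /
          ((n.choose (r + 1) : ℝ) *
            (2 : ℝ) ^ (((r : ℝ) + 1) * Int.fract (Real.logb 2 x)) / x ^ (r + 1)))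
      atTop (𝓝 1) := by
  have hpsi := measure_lt_rpow_fract_logb_div_orderStat hm hd hr
  refine ⟨hpsi, ?_⟩
  set y : ℝ → ℝ := fun x => (2 : ℝ) ^ (-⌊Real.logb 2 x⌋)
  have hy₀ : ∀ x, 0 < y x := fun x => zpow_pos two_pos _
  have hy₁ : ∀ x, 1 ≤ x → y x ≤ 1 := fun x => Real.zpow_neg_floor_logb_le_one one_lt_two
  have hC : (0 : ℝ) < n.choose (r + 1) := Nat.cast_pos.2 (Nat.choose_pos hr)
  have hlim : Tendsto (fun x => (1 - y x) ^ (n - (r + 1))) atTop (𝓝 1) := by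
    have h := ((tendsto_const_nhds (x := (1 : ℝ))).sub
      (Real.tendsto_zpow_neg_floor_logb_atTop one_lt_two)).pow (n - (r + 1))
    rwa [sub_zero, one_pow] at h
  refine Tendsto.congr' (f₁ := fun x =>
    μ.real {ω | orderStat U r ω < y x} / (n.choose (r + 1) * y x ^ (r + 1))) ?_ ?_
  · filter_upwards [eventually_gt_atTop 0] with x hx
    rw [hpsi x hx, mul_div_assoc, ← Real.rpow_mul_fract_logb_div_pow two_pos (by norm_num) hx]
    push_cast
    rfl
  refine tendsto_of_tendsto_of_tendsto_of_le_of_le' hlim tendsto_const_nhds ?_ ?_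
  · filter_upwards [eventually_ge_atTop 1] with x hx
    rw [le_div_iff₀ (by positivity), mul_comm]
    exact choose_mul_pow_mul_le_measureReal_orderStat_lt hm hindep hd hr (hy₀ x).le (hy₁ x hx)
  · filter_upwards [eventually_ge_atTop 1] with x hx
    rw [div_le_one (by positivity)]
    exact measureReal_orderStat_lt_le_choose_mul_pow hm hindep hd hr (hy₀ x).le (hy₁ x hx)

/-- For `U_{1,n} ≤ … ≤ U_{n,n}` the order statistics of `n` i.i.d. `Uniform(0,1)`
random variables, `Ψ(x) = 2^{{log₂ x}}` and `0 ≤ r < n`: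
`P{Ψ(U_{r+1,n})/U_{r+1,n} > x} = P{U_{r+1,n} < 2^{-⌊log₂ x⌋}}
  ~ C(n,r+1)·2^{(r+1){log₂ x}}/x^{r+1}` as `x → ∞`. -/
theorem stmt_16 {Ω : Type*} [MeasurableSpace Ω] (μ : Measure Ω) [IsProbabilityMeasure μ]
    (n : ℕ) (U : Fin n → Ω → ℝ) (hm : ∀ i, Measurable (U i))
    (hindep : iIndepFun U μ)
    (hd : ∀ i, μ.map (U i) = volume.restrict (Set.Ioo (0 : ℝ) 1))
    (r : ℕ) (hr : r < n) :
    (∀ x : ℝ, 0 < x →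
      μ {ω | x < (2 : ℝ) ^ Int.fract (Real.logb 2 (orderStat U r ω)) / orderStat U r ω} =
        μ {ω | orderStat U r ω < (2 : ℝ) ^ (-⌊Real.logb 2 x⌋)}) ∧
    Tendsto (fun x : ℝ =>
        (μ {ω | x < (2 : ℝ) ^ Int.fract (Real.logb 2 (orderStat U r ω)) /
            orderStat U r ω}).toReal /
          ((n.choose (r + 1) : ℝ) *
            (2 : ℝ) ^ (((r : ℝ) + 1) * Int.fract (Real.logb 2 x)) / x ^ (r + 1)))
      atTop (𝓝 1) :=
  stmt_16_general μ n U hm hindep hd r hr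
end
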